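/- arXiv:1912.09984 — 5 statements merged into one kernel-verified Lean document; each statement's English description precedes it below -/
import Mathlib

section
/- If ρ is a rank function of a sum-matroid on P(K^n) (i.e., ρ satisfies (R1), (R2), (R3)), then the dual function ρ*(L) = ρ(L⊥) + Rk(L) − ρ(K^n) also satisfies (R1), (R2), (R3), i.e., ρ* is a rank function of a sum-matroid on P(K^n). -/
open Module

/-! Setup for sum-rank metric codes and sum-matroids.

We fix `ℓ` finite fields `K i` with a common extension `F` (given by algebra
structures), and block lengths `nv i`.  The ambient space `F^n` (with
`n = ∑ i, nv i`) is modelled as the dependent product of the blocks `F^{nv i}`,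
and an element of the product lattice `P(K^n)` is a tuple of `K i`-subspaces of
`K i ^ (nv i)`. -/

/-- The ambient space `F^n`, split into `ℓ` blocks of sizes `nv i`. -/
abbrev SRAmb (ℓ : ℕ) (nv : Fin ℓ → ℕ) (F : Type) : Type :=
  (i : Fin ℓ) → Fin (nv i) → F

/-- The product lattice `P(K^n)`: tuples `L` where `L i` is a `K i`-subspace of
`K i ^ (nv i)`. -/
abbrev SRLat (ℓ : ℕ) (nv : Fin ℓ → ℕ) (K : Fin ℓ → Type) [∀ i, Field (K i)] : Type :=
  (i : Fin ℓ) → Submodule (K i) (Fin (nv i) → K i)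

variable {ℓ : ℕ} {nv : Fin ℓ → ℕ} {F : Type} [Field F]
  {K : Fin ℓ → Type} [∀ i, Field (K i)] [∀ i, Algebra (K i) F]

/-- `Rk(L) = ∑ i, dim_{K i} (L i)`. -/
noncomputable def SRrk (L : SRLat ℓ nv K) : ℕ := ∑ i, finrank (K i) (L i)

/-- Orthogonal complement of a subspace of `k^m` with respect to the standard
dot product. -/
def SRorth {k : Type} [Field k] {m : ℕ} (W : Submodule k (Fin m → k)) :
    Submodule k (Fin m → k) where
  carrier := {v | ∀ w ∈ W, ∑ t, v t * w t = 0}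
  zero_mem' := by intro w hw; simp
  add_mem' := by
    intro a b ha hb w hw
    have h : ∑ t, (a + b) t * w t = (∑ t, a t * w t) + ∑ t, b t * w t := by
      simp [add_mul, Finset.sum_add_distrib]
    rw [h, ha w hw, hb w hw, add_zero]
  smul_mem' := by
    intro c a ha w hw
    have h : ∑ t, (c • a) t * w t = c * ∑ t, a t * w t := by
      simp [Finset.mul_sum, mul_assoc]
    rw [h, ha w hw, mul_zero]

/-- Componentwise orthogonal complement `L^⊥` in the lattice `P(K^n)`. -/
def SRlatPerp (L : SRLat ℓ nv K) : SRLat ℓ nv K := fun i => SRorth (L i)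

/-- The `i`-th component of the sum-rank support of `c ∈ F^n`: the `K i`-row
space of the coordinate matrix of the `i`-th block of `c` (described
basis-freely as the span of the images of the block of `c` under all
`K i`-linear functionals `F → K i`). -/
def SRsupp (c : SRAmb ℓ nv F) (i : Fin ℓ) : Submodule (K i) (Fin (nv i) → K i) :=
  Submodule.span (K i) {v | ∃ f : F →ₗ[K i] K i, v = fun t => f (c i t)}

/-- The sum-rank weight `srank(c) = Rk(supp(c))`. -/
noncomputable def SRwt (c : SRAmb ℓ nv F) : ℕ :=
  ∑ i, finrank (K i) (SRsupp (K := K) c i)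

/-- The sum-rank support space `V_L = {c ∈ F^n : supp(c) ⊆ L}`. -/
def SRVL (L : SRLat ℓ nv K) : Submodule F (SRAmb ℓ nv F) where
  carrier := {c | ∀ i, SRsupp (K := K) c i ≤ L i}
  zero_mem' := by
    intro i
    apply Submodule.span_le.mpr
    rintro v ⟨f, rfl⟩
    have h : (fun t => f ((0 : SRAmb ℓ nv F) i t)) = (0 : Fin (nv i) → K i) := by
      funext t; simp
    rw [h]
    exact (L i).zero_mem
  add_mem' := by
    intro a b ha hb i
    apply Submodule.span_le.mpr
    rintro v ⟨f, rfl⟩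
    have h : (fun t => f ((a + b) i t)) =
        (fun t => f (a i t)) + fun t => f (b i t) := by
      funext t; simp
    rw [h]
    exact (L i).add_mem (ha i (Submodule.subset_span ⟨f, rfl⟩))
      (hb i (Submodule.subset_span ⟨f, rfl⟩))
  smul_mem' := by
    intro x a ha i
    apply Submodule.span_le.mpr
    rintro v ⟨f, rfl⟩
    have h : (fun t => f ((x • a) i t)) =
        fun t => (f.comp (LinearMap.mulLeft (K i) x)) (a i t) := by
      funext t; simp [smul_eq_mul]
    rw [h]
    exact ha i (Submodule.subset_span ⟨_, rfl⟩)

/-- The dual code `C^⊥` with respect to the standard bilinear form on `F^n`. -/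
def SRdual (C : Submodule F (SRAmb ℓ nv F)) : Submodule F (SRAmb ℓ nv F) where
  carrier := {x | ∀ c ∈ C, ∑ i, ∑ t, x i t * c i t = 0}
  zero_mem' := by intro c hc; simp
  add_mem' := by
    intro a b ha hb c hc
    have h : ∑ i, ∑ t, (a + b) i t * c i t =
        (∑ i, ∑ t, a i t * c i t) + ∑ i, ∑ t, b i t * c i t := by
      simp [add_mul, Finset.sum_add_distrib]
    rw [h, ha c hc, hb c hc, add_zero]
  smul_mem' := by
    intro x a ha c hc
    have h : ∑ i, ∑ t, (x • a) i t * c i t = x * ∑ i, ∑ t, a i t * c i t := by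
      simp [Finset.mul_sum, mul_assoc]
    rw [h, ha c hc, mul_zero]

/-- `C(L) = {c ∈ C^⊥ : supp(c) ⊆ L^⊥} = C^⊥ ∩ V_{L^⊥}`. -/
def SRCL (C : Submodule F (SRAmb ℓ nv F)) (L : SRLat ℓ nv K) :
    Submodule F (SRAmb ℓ nv F) :=
  SRdual C ⊓ SRVL (SRlatPerp L)

/-- The projection `Π_L : F^n → F^{Rk L}`, `x ↦ x Aᵀ`, where
`A = diag(A_1, …, A_ℓ)` and `A_i` is the matrix whose rows are the chosen basis
of `L i` over `K i`.  The target `F^{Rk L}` is indexed blockwise. -/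
noncomputable def SRpi (L : SRLat ℓ nv K) :
    SRAmb ℓ nv F →ₗ[F] ((i : Fin ℓ) → Fin (finrank (K i) (L i)) → F) where
  toFun x := fun i j =>
    ∑ t, x i t * algebraMap (K i) F ((Module.finBasis (K i) (L i) j).val t)
  map_add' x y := by
    funext i j
    simp [add_mul, Finset.sum_add_distrib]
  map_smul' a x := by
    funext i j
    simp [Finset.mul_sum, mul_assoc]

/-- The rank function `ρ_C(L) = dim_F Π_L(C^⊥)` of the sum-matroid associated
to the code `C`. -/
noncomputable def SRrho (C : Submodule F (SRAmb ℓ nv F)) (L : SRLat ℓ nv K) : ℕ :=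
  finrank F (Submodule.map (SRpi (F := F) L) (SRdual C))

/-- Minimum sum-rank distance of a code. -/
noncomputable def SRminDist (K : Fin ℓ → Type) [∀ i, Field (K i)]
    [∀ i, Algebra (K i) F] (C : Submodule F (SRAmb ℓ nv F)) : ℕ :=
  sInf {w | ∃ c ∈ C, c ≠ 0 ∧ SRwt (K := K) c = w}

/-- The `r`-th generalized sum-rank weight
`d_{SR,r}(C) = min{Rk L : dim_F (C ∩ V_L) ≥ r}`. -/
noncomputable def SRdgw (K : Fin ℓ → Type) [∀ i, Field (K i)]
    [∀ i, Algebra (K i) F] (C : Submodule F (SRAmb ℓ nv F)) (r : ℕ) : ℕ :=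
  sInf {w | ∃ L : SRLat ℓ nv K, r ≤ finrank F ↥(C ⊓ SRVL L) ∧ SRrk L = w}

/-- The sum-matroid axioms (R1), (R2), (R3) for a function `ρ : P(K^n) → ℕ`. -/
def IsSumMatroid (ρ : SRLat ℓ nv K → ℕ) : Prop :=
  (∀ L, ρ L ≤ SRrk L) ∧
  (∀ L L' : SRLat ℓ nv K, L ≤ L' → ρ L ≤ ρ L') ∧
  (∀ L L' : SRLat ℓ nv K, ρ (L ⊔ L') + ρ (L ⊓ L') ≤ ρ L + ρ L')

/-- The dual rank function `ρ*(L) = ρ(L^⊥) + Rk L − ρ(K^n)`. -/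
noncomputable def SRdualRk (ρ : SRLat ℓ nv K → ℕ) (L : SRLat ℓ nv K) : ℕ :=
  ρ (SRlatPerp L) + SRrk L - ρ ⊤

/-- The nullity function `η(L) = Rk L − ρ(L)`. -/
noncomputable def SReta (ρ : SRLat ℓ nv K → ℕ) (L : SRLat ℓ nv K) : ℕ :=
  SRrk L - ρ L

/-- The `i`-th generalized weight of a sum-matroid,
`d_i(M) = min{Rk L : η(L) = i}`. -/
noncomputable def SRgw (ρ : SRLat ℓ nv K → ℕ) (i : ℕ) : ℕ :=
  sInf {w | ∃ L : SRLat ℓ nv K, SReta ρ L = i ∧ SRrk L = w}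

/-! The standard dot product on each block is nondegenerate, so `L ↦ L⊥` is an
inclusion-reversing involution of `P(K^n)`; it exchanges `⊔` and `⊓` and satisfies
`Rk L⊥ + Rk L = Rk K^n`. Splitting `L' = L ⊕ X` and applying (R3) and (R1) to `L, X` gives
`ρ L' + Rk L ≤ ρ L + Rk L'` whenever `L ≤ L'`; for `L⊥ ≤ K^n` this is
`ρ(K^n) ≤ ρ(L⊥) + Rk L`, so the natural-number subtraction in `ρ*` never truncates, and
(R1)–(R3) for `ρ*` become linear consequences of those for `ρ` at the complements. -/

section Orthogonal

variable {k : Type} [Field k] {m : ℕ}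

lemma dotProductBilin_isRefl :
    LinearMap.BilinForm.IsRefl (dotProductBilin k k : LinearMap.BilinForm k (Fin m → k)) :=
  fun v w h => (dotProduct_comm w v).trans h

lemma dotProductBilin_nondegenerate :
    (dotProductBilin k k : LinearMap.BilinForm k (Fin m → k)).Nondegenerate :=
  ⟨fun v hv => dotProduct_eq_zero v hv,
    fun v hv => dotProduct_eq_zero v fun w => (dotProduct_comm v w).trans (hv w)⟩

lemma SRorth_eq_orthogonal (W : Submodule k (Fin m → k)) :
    SRorth W = LinearMap.BilinForm.orthogonal (dotProductBilin k k) W := by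
  ext v
  exact forall₂_congr fun w _ => by change v ⬝ᵥ w = 0 ↔ w ⬝ᵥ v = 0; rw [dotProduct_comm]

lemma finrank_SRorth_add_finrank (W : Submodule k (Fin m → k)) :
    finrank k (SRorth W) + finrank k W = m := by
  have := Submodule.finrank_le W
  rw [SRorth_eq_orthogonal, LinearMap.BilinForm.finrank_orthogonal dotProductBilin_nondegenerate]
  rw [finrank_fin_fun] at this ⊢
  omega

lemma SRorth_SRorth (W : Submodule k (Fin m → k)) : SRorth (SRorth W) = W := by
  rw [SRorth_eq_orthogonal, SRorth_eq_orthogonal]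
  exact LinearMap.BilinForm.orthogonal_orthogonal dotProductBilin_nondegenerate
    dotProductBilin_isRefl W

lemma SRorth_antitone : Antitone (SRorth : Submodule k (Fin m → k) → Submodule k (Fin m → k)) :=
  fun _ _ h _ hv w hw => hv w (h hw)

lemma SRorth_le_SRorth_iff {W W' : Submodule k (Fin m → k)} :
    SRorth W ≤ SRorth W' ↔ W' ≤ W :=
  ⟨fun h => by simpa only [SRorth_SRorth] using SRorth_antitone h, fun h => SRorth_antitone h⟩

end Orthogonal

def SRlatPerpOrderIso : SRLat ℓ nv K ≃o (SRLat ℓ nv K)ᵒᵈ where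
  toFun L := OrderDual.toDual (SRlatPerp L)
  invFun L := SRlatPerp (OrderDual.ofDual L)
  left_inv L := funext fun i => SRorth_SRorth (L i)
  right_inv L := funext fun i => SRorth_SRorth (OrderDual.ofDual L i)
  map_rel_iff' := forall_congr' fun _ => SRorth_le_SRorth_iff

lemma SRlatPerp_antitone : Antitone (SRlatPerp : SRLat ℓ nv K → SRLat ℓ nv K) :=
  fun _ _ h i => SRorth_antitone (h i)

lemma SRlatPerp_sup (L L' : SRLat ℓ nv K) :
    SRlatPerp (L ⊔ L') = SRlatPerp L ⊓ SRlatPerp L' :=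
  SRlatPerpOrderIso.map_sup L L'

lemma SRlatPerp_inf (L L' : SRLat ℓ nv K) :
    SRlatPerp (L ⊓ L') = SRlatPerp L ⊔ SRlatPerp L' :=
  SRlatPerpOrderIso.map_inf L L'

lemma SRrk_bot : SRrk (⊥ : SRLat ℓ nv K) = 0 :=
  Finset.sum_eq_zero fun i _ => finrank_bot (K i) (Fin (nv i) → K i)

lemma SRrk_sup_add_SRrk_inf (L L' : SRLat ℓ nv K) :
    SRrk (L ⊔ L') + SRrk (L ⊓ L') = SRrk L + SRrk L' := by
  simp only [SRrk, ← Finset.sum_add_distrib]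
  exact Finset.sum_congr rfl fun i _ => Submodule.finrank_sup_add_finrank_inf_eq (L i) (L' i)

lemma SRrk_SRlatPerp_add_SRrk (L : SRLat ℓ nv K) :
    SRrk (SRlatPerp L) + SRrk L = SRrk (⊤ : SRLat ℓ nv K) := by
  simp only [SRrk, ← Finset.sum_add_distrib]
  refine Finset.sum_congr rfl fun i _ => ?_
  rw [Pi.top_apply, finrank_top, finrank_fin_fun]
  exact finrank_SRorth_add_finrank (L i)

lemma exists_sup_eq_inf_eq_bot_of_le {α : Type*} [Lattice α] [BoundedOrder α]
    [IsModularLattice α] [ComplementedLattice α] {a b : α} (h : a ≤ b) :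
    ∃ c, a ⊔ c = b ∧ a ⊓ c = ⊥ := by
  obtain ⟨c, hc⟩ := exists_isCompl a
  refine ⟨c ⊓ b, ?_, ?_⟩
  · rw [← sup_inf_assoc_of_le c h, hc.sup_eq_top, top_inf_eq]
  · rw [← inf_assoc, hc.inf_eq_bot, bot_inf_eq]

lemma SRLat.exists_sup_eq_inf_eq_bot_of_le {L L' : SRLat ℓ nv K} (h : L ≤ L') :
    ∃ X, L ⊔ X = L' ∧ L ⊓ X = ⊥ := by
  choose X hsup hinf using fun i => _root_.exists_sup_eq_inf_eq_bot_of_le (h i)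
  exact ⟨X, funext hsup, funext hinf⟩

namespace IsSumMatroid

variable {ρ : SRLat ℓ nv K → ℕ}

lemma rho_add_SRrk_le (hρ : IsSumMatroid ρ) {L L' : SRLat ℓ nv K} (h : L ≤ L') :
    ρ L' + SRrk L ≤ ρ L + SRrk L' := by
  obtain ⟨X, hsup, hinf⟩ := SRLat.exists_sup_eq_inf_eq_bot_of_le h
  have hsub := hρ.2.2 L X
  have hX := hρ.1 X
  have hrk := SRrk_sup_add_SRrk_inf L X
  rw [hsup, hinf, SRrk_bot] at hrk
  rw [hsup] at hsub
  omega

lemma rho_top_le (hρ : IsSumMatroid ρ) (L : SRLat ℓ nv K) :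
    ρ ⊤ ≤ ρ (SRlatPerp L) + SRrk L := by
  have := hρ.rho_add_SRrk_le (le_top : SRlatPerp L ≤ ⊤)
  have := SRrk_SRlatPerp_add_SRrk L
  omega

lemma SRdualRk_add_rho_top (hρ : IsSumMatroid ρ) (L : SRLat ℓ nv K) :
    SRdualRk ρ L + ρ ⊤ = ρ (SRlatPerp L) + SRrk L :=
  Nat.sub_add_cancel (hρ.rho_top_le L)

end IsSumMatroid

theorem stmt1_dual_is_sum_matroid_general
    {ℓ : ℕ} {nv : Fin ℓ → ℕ}
    {K : Fin ℓ → Type} [∀ i, Field (K i)]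
    (ρ : SRLat ℓ nv K → ℕ) (hρ : IsSumMatroid ρ) :
    IsSumMatroid (SRdualRk ρ) := by
  have hdual := hρ.SRdualRk_add_rho_top
  refine ⟨fun L => ?_, fun L L' h => ?_, fun L L' => ?_⟩
  · have := hρ.2.1 (SRlatPerp L) ⊤ le_top
    have := hdual L
    omega
  · have := hρ.rho_add_SRrk_le (SRlatPerp_antitone h)
    have := SRrk_SRlatPerp_add_SRrk L
    have := SRrk_SRlatPerp_add_SRrk L'
    have := hdual L
    have := hdual L'
    omega
  · have hsub := hρ.2.2 (SRlatPerp L) (SRlatPerp L')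
    rw [← SRlatPerp_inf, ← SRlatPerp_sup] at hsub
    have := SRrk_sup_add_SRrk_inf L L'
    have := hdual L
    have := hdual L'
    have := hdual (L ⊔ L')
    have := hdual (L ⊓ L')
    omega

/-- If `ρ` is the rank function of a sum-matroid on `P(K^n)`,
then the dual function `ρ*(L) = ρ(L^⊥) + Rk L − ρ(K^n)` also satisfies the
sum-matroid axioms (R1), (R2), (R3). -/
theorem stmt1_dual_is_sum_matroid
    {ℓ : ℕ} (hℓ : 0 < ℓ) {nv : Fin ℓ → ℕ} (hnv : ∀ i, 0 < nv i)
    {F : Type} [Field F] [Finite F]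
    {K : Fin ℓ → Type} [∀ i, Field (K i)] [∀ i, Finite (K i)]
    [∀ i, Algebra (K i) F] [∀ i, FiniteDimensional (K i) F]
    (ρ : SRLat ℓ nv K → ℕ) (hρ : IsSumMatroid ρ) :
    IsSumMatroid (SRdualRk ρ) :=
  stmt1_dual_is_sum_matroid_general ρ hρ
end

section
/- Let C be an [n,k;n_1,…,n_ℓ] sum-rank metric code over (F;K_1,…,K_ℓ). Then the function ρ_C, defined by ρ_C(L) = dim_F Π_L(C⊥) for L ∈ P(K^n), satisfies the three sum-matroid axioms: (R1) 0 ≤ ρ_C(L) ≤ Rk(L) for all L; (R2) L ⊆ L' implies ρ_C(L) ≤ ρ_C(L'); (R3) ρ_C(L+L') + ρ_C(L∩L') ≤ ρ_C(L) + ρ_C(L') for all L, L' ∈ P(K^n). Hence (K^n, ρ_C) is a sum-matroid. -/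
open Module

variable {ℓ : ℕ} {nv : Fin ℓ → ℕ} {F : Type} [Field F]
  {K : Fin ℓ → Type} [∀ i, Field (K i)] [∀ i, Algebra (K i) F]

/-! ### Auxiliary lemmas -/

section Aux

lemma SRorth_antitone_s4 {k : Type} [Field k] {m : ℕ} {W W' : Submodule k (Fin m → k)}
    (h : W ≤ W') : SRorth W' ≤ SRorth W := by
  intro v hv w hw
  exact hv w (h hw)

lemma SRorth_sup {k : Type} [Field k] {m : ℕ} (W W' : Submodule k (Fin m → k)) :
    SRorth (W ⊔ W') = SRorth W ⊓ SRorth W' := by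
  apply le_antisymm
  · exact le_inf (SRorth_antitone_s4 le_sup_left) (SRorth_antitone_s4 le_sup_right)
  · rintro v ⟨hv, hv'⟩ w hw
    rcases Submodule.mem_sup.mp hw with ⟨a, ha, b, hb, rfl⟩
    have : ∑ t, v t * (a + b) t = (∑ t, v t * a t) + ∑ t, v t * b t := by
      simp [mul_add, Finset.sum_add_distrib]
    rw [this, hv a ha, hv' b hb, add_zero]

lemma SRsupp_le_iff {c : SRAmb ℓ nv F} {i : Fin ℓ}
    {W : Submodule (K i) (Fin (nv i) → K i)} :
    SRsupp (K := K) c i ≤ W ↔ ∀ f : F →ₗ[K i] K i, (fun t => f (c i t)) ∈ W := by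
  rw [SRsupp, Submodule.span_le]
  constructor
  · intro h f; exact h ⟨f, rfl⟩
  · rintro h v ⟨f, rfl⟩; exact h f

lemma SRVL_mono {M M' : SRLat ℓ nv K} (h : M ≤ M') :
    SRVL (F := F) M ≤ SRVL (F := F) M' := by
  intro c hc i
  exact le_trans (hc i) (h i)

/-- For fixed `y : F^{nv i}`, the set of `w` with `∑ t, y t * ι(w t) = 0` is a
`K i`-submodule. -/
def SRWx (i : Fin ℓ) (y : Fin (nv i) → F) : Submodule (K i) (Fin (nv i) → K i) where
  carrier := {w | ∑ t, y t * algebraMap (K i) F (w t) = 0}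
  zero_mem' := by simp
  add_mem' := by
    intro a b ha hb
    have ha' : ∑ t, y t * algebraMap (K i) F (a t) = 0 := ha
    have hb' : ∑ t, y t * algebraMap (K i) F (b t) = 0 := hb
    show ∑ t, y t * algebraMap (K i) F ((a + b) t) = 0
    calc ∑ t, y t * algebraMap (K i) F ((a + b) t)
        = (∑ t, y t * algebraMap (K i) F (a t)) + ∑ t, y t * algebraMap (K i) F (b t) := by
          rw [← Finset.sum_add_distrib]
          exact Finset.sum_congr rfl fun t _ => by simp [map_add, mul_add]
      _ = 0 := by rw [ha', hb', add_zero]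
  smul_mem' := by
    intro c a ha
    have ha' : ∑ t, y t * algebraMap (K i) F (a t) = 0 := ha
    show ∑ t, y t * algebraMap (K i) F ((c • a) t) = 0
    calc ∑ t, y t * algebraMap (K i) F ((c • a) t)
        = algebraMap (K i) F c * ∑ t, y t * algebraMap (K i) F (a t) := by
          rw [Finset.mul_sum]
          exact Finset.sum_congr rfl fun t _ => by
            simp [smul_eq_mul, map_mul]; ring
      _ = 0 := by rw [ha', mul_zero]

/-- The key pointwise description: the `i`-block conditions for `x ∈ ker Π_L`
are equivalent to `supp(x)_i ⊆ (L i)^⊥`. -/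
lemma srpi_block_zero_iff [∀ i, FiniteDimensional (K i) F] (L : SRLat ℓ nv K)
    (x : SRAmb ℓ nv F) (i : Fin ℓ) :
    (∀ w ∈ L i, ∑ t, x i t * algebraMap (K i) F (w t) = 0) ↔
      SRsupp (K := K) x i ≤ SRorth (L i) := by
  constructor
  · intro h
    rw [SRsupp_le_iff]
    intro f w hw
    have hz : ∑ t, x i t * algebraMap (K i) F (w t) = 0 := h w hw
    have := congrArg f hz
    rw [map_sum, map_zero] at this
    calc ∑ t, f (x i t) * w t = ∑ t, f (x i t * algebraMap (K i) F (w t)) := by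
          refine Finset.sum_congr rfl fun t _ => ?_
          rw [show x i t * algebraMap (K i) F (w t) = w t • x i t by
            rw [Algebra.smul_def, mul_comm], map_smul, smul_eq_mul, mul_comm]
      _ = 0 := this
  · intro h w hw
    have hd : ∀ f : Module.Dual (K i) F, f (∑ t, x i t * algebraMap (K i) F (w t)) = 0 := by
      intro f
      have hf : (fun t => f (x i t)) ∈ SRorth (L i) := (SRsupp_le_iff.mp h) f
      have := hf w hw
      rw [map_sum]
      calc ∑ t, f (x i t * algebraMap (K i) F (w t)) = ∑ t, f (x i t) * w t := by
            refine Finset.sum_congr rfl fun t _ => ?_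
            rw [show x i t * algebraMap (K i) F (w t) = w t • x i t by
              rw [Algebra.smul_def, mul_comm], map_smul, smul_eq_mul, mul_comm]
        _ = 0 := this
    exact (Module.forall_dual_apply_eq_zero_iff (K i) _).mp hd

lemma ker_SRpi [∀ i, FiniteDimensional (K i) F] (L : SRLat ℓ nv K) :
    LinearMap.ker (SRpi (F := F) (K := K) L) = SRVL (SRlatPerp L) := by
  ext x
  have hmem : x ∈ LinearMap.ker (SRpi (F := F) (K := K) L) ↔
      ∀ i j, ∑ t, x i t * algebraMap (K i) F ((Module.finBasis (K i) (L i) j).val t) = 0 := by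
    rw [LinearMap.mem_ker]
    constructor
    · intro h i j
      exact congrFun (congrFun h i) j
    · intro h
      funext i j
      exact h i j
  rw [hmem]
  have key : (∀ i j, ∑ t, x i t *
        algebraMap (K i) F ((Module.finBasis (K i) (L i) j).val t) = 0) ↔
      ∀ i, ∀ w ∈ L i, ∑ t, x i t * algebraMap (K i) F (w t) = 0 := by
    constructor
    · intro h i w hw
      have hspan : L i ≤ SRWx (nv := nv) (K := K) i (x i) := by
        have hb : Submodule.map (L i).subtype
            (Submodule.span (K i) (Set.range (Module.finBasis (K i) (L i)))) = L i := by
          rw [Basis.span_eq, Submodule.map_top, Submodule.range_subtype]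
        rw [← hb, Submodule.map_span, Submodule.span_le]
        rintro v ⟨u, ⟨j, rfl⟩, rfl⟩
        exact h i j
      exact hspan hw
    · intro h i j
      exact h i _ (Module.finBasis (K i) (L i) j).2
  rw [key]
  constructor
  · intro h i
    exact (srpi_block_zero_iff L x i).mp (h i)
  · intro h i
    exact (srpi_block_zero_iff L x i).mpr (h i)

set_option synthInstance.maxHeartbeats 1000000 in
/-- Rank–nullity: `ρ_C(L) + dim (C^⊥ ⊓ V_{L^⊥}) = dim C^⊥`. -/
lemma SRrho_add_eq [Finite F] [∀ i, FiniteDimensional (K i) F]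
    (C : Submodule F (SRAmb ℓ nv F)) (L : SRLat ℓ nv K) :
    SRrho C L + finrank F ↥(SRdual C ⊓ SRVL (SRlatPerp L)) = finrank F ↥(SRdual C) := by
  classical
  set f := SRpi (F := F) (K := K) L
  set D := SRdual C
  have h1 := LinearMap.finrank_range_add_finrank_ker (f.domRestrict D)
  have hr : LinearMap.range (f.domRestrict D) = Submodule.map f D :=
    LinearMap.range_domRestrict D f
  have hk : LinearMap.ker (f.domRestrict D) = Submodule.comap D.subtype (D ⊓ LinearMap.ker f) := by
    rw [LinearMap.ker_domRestrict, Submodule.comap_inf, Submodule.comap_subtype_self, top_inf_eq]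
  have hfr : finrank F ↥(LinearMap.ker (f.domRestrict D)) = finrank F ↥(D ⊓ LinearMap.ker f) := by
    rw [hk]
    exact (Submodule.comapSubtypeEquivOfLe (inf_le_left : D ⊓ LinearMap.ker f ≤ D)).finrank_eq
  rw [hr, hfr, ker_SRpi] at h1
  exact h1

end Aux

/-- The function `ρ_C(L) = dim_F Π_L(C^⊥)` associated to a
sum-rank metric code `C` satisfies the sum-matroid axioms (R1), (R2), (R3);
hence `(K^n, ρ_C)` is a sum-matroid. -/
theorem stmt4_rhoC_is_sum_matroid
    {ℓ : ℕ} (hℓ : 0 < ℓ) {nv : Fin ℓ → ℕ} (hnv : ∀ i, 0 < nv i)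
    {F : Type} [Field F] [Finite F]
    {K : Fin ℓ → Type} [∀ i, Field (K i)] [∀ i, Finite (K i)]
    [∀ i, Algebra (K i) F] [∀ i, FiniteDimensional (K i) F]
    (C : Submodule F (SRAmb ℓ nv F)) (k : ℕ) (hk : Module.finrank F C = k) :
    IsSumMatroid (fun L : SRLat ℓ nv K => SRrho C L) := by
  classical
  refine ⟨?_, ?_, ?_⟩
  · -- (R1): ρ_C(L) ≤ Rk L
    intro L
    have h1 : SRrho C L ≤
        finrank F ((i : Fin ℓ) → Fin (finrank (K i) (L i)) → F) :=
      Submodule.finrank_le _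
    have h2 : finrank F ((i : Fin ℓ) → Fin (finrank (K i) (L i)) → F) = SRrk L := by
      rw [Module.finrank_pi_fintype F]
      unfold SRrk
      exact Finset.sum_congr rfl fun i _ => by
        rw [Module.finrank_pi F, Fintype.card_fin]
    simpa [h2] using h1
  · -- (R2): monotonicity
    intro L L' hLL'
    show SRrho C L ≤ SRrho C L'
    have hperp : SRlatPerp L' ≤ SRlatPerp L := fun i => SRorth_antitone_s4 (hLL' i)
    have hVL : SRVL (F := F) (SRlatPerp L') ≤ SRVL (F := F) (SRlatPerp L) :=
      SRVL_mono hperp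
    have hmono : finrank F ↥(SRdual C ⊓ SRVL (SRlatPerp L')) ≤
        finrank F ↥(SRdual C ⊓ SRVL (SRlatPerp L)) :=
      Submodule.finrank_mono (inf_le_inf_left _ hVL)
    have e1 := SRrho_add_eq C L
    have e2 := SRrho_add_eq C L'
    omega
  · -- (R3): submodularity
    intro L L'
    show SRrho C (L ⊔ L') + SRrho C (L ⊓ L') ≤ SRrho C L + SRrho C L'
    have hsupVL : SRVL (F := F) (SRlatPerp (L ⊔ L')) =
        SRVL (F := F) (SRlatPerp L) ⊓ SRVL (F := F) (SRlatPerp L') := by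
      apply le_antisymm
      · exact le_inf (SRVL_mono fun i => SRorth_antitone_s4 le_sup_left)
          (SRVL_mono fun i => SRorth_antitone_s4 le_sup_right)
      · rintro c ⟨hc1, hc2⟩ i
        have : SRorth ((L ⊔ L') i) = SRorth (L i) ⊓ SRorth (L' i) := by
          have : (L ⊔ L') i = L i ⊔ L' i := rfl
          rw [this, SRorth_sup]
        rw [SRlatPerp, this]
        exact le_inf (hc1 i) (hc2 i)
    have hinf : (SRdual C ⊓ SRVL (SRlatPerp L)) ⊓ (SRdual C ⊓ SRVL (SRlatPerp L')) =
        SRdual C ⊓ SRVL (SRlatPerp (L ⊔ L')) := by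
      rw [hsupVL]
      exact (inf_inf_distrib_left _ _ _).symm
    have hsup : (SRdual C ⊓ SRVL (SRlatPerp L)) ⊔ (SRdual C ⊓ SRVL (SRlatPerp L')) ≤
        SRdual C ⊓ SRVL (SRlatPerp (L ⊓ L')) := by
      apply sup_le
      · exact inf_le_inf_left _ (SRVL_mono fun i => SRorth_antitone_s4 inf_le_left)
      · exact inf_le_inf_left _ (SRVL_mono fun i => SRorth_antitone_s4 inf_le_right)
    have hmodular := Submodule.finrank_sup_add_finrank_inf_eq
      (SRdual C ⊓ SRVL (SRlatPerp L)) (SRdual C ⊓ SRVL (SRlatPerp L'))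
    have hle : finrank F ↥((SRdual C ⊓ SRVL (SRlatPerp L)) ⊔ (SRdual C ⊓ SRVL (SRlatPerp L'))) ≤
        finrank F ↥(SRdual C ⊓ SRVL (SRlatPerp (L ⊓ L'))) :=
      Submodule.finrank_mono hsup
    have e1 := SRrho_add_eq C L
    have e2 := SRrho_add_eq C L'
    have e3 := SRrho_add_eq C (L ⊔ L')
    have e4 := SRrho_add_eq C (L ⊓ L')
    rw [hinf] at hmodular
    omega
end

section
/- Let C be an [n,k;n_1,…,n_ℓ] sum-rank metric code over (F;K_1,…,K_ℓ) and let ρ_C be the rank function of the associated sum-matroid, with nullity η_C(L) = Rk(L) − ρ_C(L). Then for every L ∈ P(K^n), η_C(L) = dim_F(C ∩ V_L). -/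
open Module

variable {ℓ : ℕ} {nv : Fin ℓ → ℕ} {F : Type} [Field F]
  {K : Fin ℓ → Type} [∀ i, Field (K i)] [∀ i, Algebra (K i) F]

/-!
Write `A = diag(A_1, …, A_ℓ)`, so that `Π_L` is `x ↦ x Aᵀ`. For the standard dot products the
map `y ↦ y A : F^{Rk L} → F^n` is the adjoint of `Π_L`; it is injective, since a `K_i`-basis of
`L_i` stays linearly independent over `F`, and its image is `V_L`. Hence the orthogonal of
`Π_L(C^⊥)` in `F^{Rk L}`, of dimension `Rk L − ρ_C(L)`, is the preimage of `C^⊥⊥ = C` under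
`y ↦ y A`, which is isomorphic to `C ∩ V_L`.
-/

section BlockDot
variable (𝕜 : Type) [Field 𝕜] {ι : Type} [Fintype ι] (κ : ι → Type) [∀ i, Fintype (κ i)]

noncomputable def blockDotForm : LinearMap.BilinForm 𝕜 ((i : ι) → κ i → 𝕜) :=
  LinearMap.mk₂ 𝕜 (fun x y => ∑ i, ∑ t, x i t * y i t)
    (fun x x' y => by simp only [Pi.add_apply, add_mul, Finset.sum_add_distrib])
    (fun c x y => by simp only [Pi.smul_apply, smul_eq_mul, mul_assoc, Finset.mul_sum])
    (fun x y y' => by simp only [Pi.add_apply, mul_add, Finset.sum_add_distrib])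
    (fun c x y => by simp only [Pi.smul_apply, smul_eq_mul, mul_left_comm, Finset.mul_sum])

variable {𝕜 κ}

theorem blockDotForm_apply (x y : (i : ι) → κ i → 𝕜) :
    blockDotForm 𝕜 κ x y = ∑ i, ∑ t, x i t * y i t := rfl

theorem blockDotForm_comm (x y : (i : ι) → κ i → 𝕜) :
    blockDotForm 𝕜 κ x y = blockDotForm 𝕜 κ y x := by
  simp only [blockDotForm_apply, mul_comm]

theorem blockDotForm_isRefl : (blockDotForm 𝕜 κ).IsRefl := fun x y h => by
  rwa [blockDotForm_comm]

theorem blockDotForm_nondegenerate : (blockDotForm 𝕜 κ).Nondegenerate := by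
  classical
  have hleft : (blockDotForm 𝕜 κ).SeparatingLeft := fun x hx => by
    funext i t
    have h := hx (Pi.single i (Pi.single t 1))
    rwa [blockDotForm_apply, Finset.sum_eq_single i (fun i' _ hi' => by simp [hi'])
      (by simp), Pi.single_eq_same, Finset.sum_eq_single t (fun t' _ ht' => by simp [ht'])
      (by simp), Pi.single_eq_same, mul_one] at h
  exact ⟨hleft, fun y hy => hleft y fun x => by rw [blockDotForm_comm, hy]⟩

end BlockDot

theorem finrank_sub_finrank_map_orthogonal {𝕜 V W : Type} [Field 𝕜] [AddCommGroup V] [Module 𝕜 V]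
    [FiniteDimensional 𝕜 V] [AddCommGroup W] [Module 𝕜 W] [FiniteDimensional 𝕜 W]
    {B : LinearMap.BilinForm 𝕜 V} {B' : LinearMap.BilinForm 𝕜 W} (hB : B.Nondegenerate)
    (hBr : B.IsRefl) (hB' : B'.Nondegenerate) {f : V →ₗ[𝕜] W} {g : W →ₗ[𝕜] V}
    (hfg : ∀ x y, B' (f x) y = B x (g y)) (hg : Function.Injective g) (C : Submodule 𝕜 V) :
    finrank 𝕜 W - finrank 𝕜 ((B.orthogonal C).map f) = finrank 𝕜 ↥(C ⊓ LinearMap.range g) := by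
  have horth : B'.orthogonal ((B.orthogonal C).map f) = C.comap g := by
    ext y
    conv_rhs => rw [Submodule.mem_comap, ← B.orthogonal_orthogonal hB hBr C]
    simp only [LinearMap.BilinForm.mem_orthogonal_iff, Submodule.mem_map, forall_exists_index,
      and_imp, forall_apply_eq_imp_iff₂, hfg]
  rw [← LinearMap.BilinForm.finrank_orthogonal hB', horth, inf_comm, ← Submodule.map_comap_eq]
  exact (Submodule.equivMapOfInjective g hg _).finrank_eq

section ExtendScalars
variable {k E : Type} [Field k] [Field E] [Algebra k E] {ι κ : Type} [Fintype κ]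

theorem dual_comp_linearCombination_algebraMap (f : E →ₗ[k] k) (v : κ → ι → k) (y : κ → E) :
    (fun t => f (Fintype.linearCombination E (fun j t => algebraMap k E (v j t)) y t)) =
      ∑ j, f (y j) • v j := by
  funext t
  simp only [Fintype.linearCombination_apply, Finset.sum_apply, Pi.smul_apply, smul_eq_mul,
    map_sum, mul_comm (y _), ← Algebra.smul_def, map_smul]
  exact Finset.sum_congr rfl fun _ _ => mul_comm _ _

theorem LinearIndependent.algebraMap_comp {v : κ → ι → k} (hv : LinearIndependent k v) :
    LinearIndependent E fun j t => algebraMap k E (v j t) := by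
  rw [Fintype.linearIndependent_iff]
  intro y hy j
  refine (Module.forall_dual_apply_eq_zero_iff k (y j)).mp fun f => ?_
  have h := dual_comp_linearCombination_algebraMap f v y
  rw [Fintype.linearCombination_apply, hy] at h
  exact Fintype.linearIndependent_iff.mp hv _ (by simpa [Pi.zero_def] using h.symm) j

theorem mem_span_algebraMap_comp_iff [FiniteDimensional k E] (v : κ → ι → k) (c : ι → E) :
    c ∈ Submodule.span E (Set.range fun j t => algebraMap k E (v j t)) ↔
      ∀ f : E →ₗ[k] k, (fun t => f (c t)) ∈ Submodule.span k (Set.range v) := by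
  constructor
  · rw [← Fintype.range_linearCombination]
    rintro ⟨y, rfl⟩ f
    rw [dual_comp_linearCombination_algebraMap]
    exact Submodule.sum_mem _ fun j _ => Submodule.smul_mem _ _ (Submodule.subset_span ⟨j, rfl⟩)
  · intro hc
    have hemb : Submodule.span k (Set.range v) ≤
        ((Submodule.span E (Set.range fun j t => algebraMap k E (v j t))).restrictScalars k).comap
          ((Algebra.linearMap k E).compLeft ι) :=
      Submodule.span_le.mpr (Set.range_subset_iff.mpr fun j => Submodule.subset_span ⟨j, rfl⟩)
    set e := Module.finBasis k E
    have hexpand : c = ∑ s, e s • fun t => algebraMap k E (e.coord s (c t)) := by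
      funext t
      simp only [Finset.sum_apply, Pi.smul_apply, smul_eq_mul, Basis.coord_apply, mul_comm (e _),
        ← Algebra.smul_def]
      exact (e.sum_repr (c t)).symm
    rw [hexpand]
    exact Submodule.sum_mem _ fun s _ => Submodule.smul_mem _ _ (hemb (hc (e.coord s)))

end ExtendScalars

theorem Submodule.span_range_coe_finBasis {k M : Type} [Field k] [AddCommGroup M] [Module k M]
    (W : Submodule k M) [FiniteDimensional k W] :
    Submodule.span k (Set.range fun j => (Module.finBasis k W j : M)) = W := by
  rw [Set.range_comp' Subtype.val, ← W.coe_subtype, ← Submodule.map_span, Basis.span_eq,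
    Submodule.map_top, Submodule.range_subtype]

/-- The map `y ↦ y A`, transpose of `SRpi L`. -/
noncomputable def SRpiTranspose (L : SRLat ℓ nv K) :
    ((i : Fin ℓ) → Fin (finrank (K i) (L i)) → F) →ₗ[F] SRAmb ℓ nv F :=
  LinearMap.piMap fun i => Fintype.linearCombination F fun j t =>
    algebraMap (K i) F ((Module.finBasis (K i) (L i) j).val t)

theorem SRdual_eq_orthogonal (C : Submodule F (SRAmb ℓ nv F)) :
    SRdual C = (blockDotForm F fun i => Fin (nv i)).orthogonal C := by
  ext x
  rw [LinearMap.BilinForm.mem_orthogonal_iff]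
  show (∀ c ∈ C, ∑ i, ∑ t, x i t * c i t = 0) ↔ _
  simp only [blockDotForm_apply, mul_comm (x _ _)]

theorem blockDotForm_SRpi (L : SRLat ℓ nv K) (x : SRAmb ℓ nv F)
    (y : (i : Fin ℓ) → Fin (finrank (K i) (L i)) → F) :
    blockDotForm F _ (SRpi L x) y = blockDotForm F _ x (SRpiTranspose L y) := by
  simp only [blockDotForm_apply, SRpi, SRpiTranspose, LinearMap.coe_mk, AddHom.coe_mk,
    LinearMap.coe_piMap, Pi.map_apply, Fintype.linearCombination_apply, Finset.sum_apply,
    Pi.smul_apply, smul_eq_mul, Finset.sum_mul, Finset.mul_sum]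
  refine Finset.sum_congr rfl fun i _ => Finset.sum_comm.trans ?_
  exact Finset.sum_congr rfl fun t _ => Finset.sum_congr rfl fun j _ => by ring

theorem SRpiTranspose_injective (L : SRLat ℓ nv K) :
    Function.Injective (SRpiTranspose (F := F) L) := by
  rw [SRpiTranspose, LinearMap.coe_piMap]
  refine Function.Injective.piMap fun i => ?_
  rw [← linearIndependent_iff_injective_fintypeLinearCombination]
  exact ((Module.finBasis (K i) (L i)).linearIndependent.map' _
    (Submodule.ker_subtype _)).algebraMap_comp

theorem mem_SRVL_iff (L : SRLat ℓ nv K) (c : SRAmb ℓ nv F) :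
    c ∈ SRVL L ↔ ∀ i, ∀ f : F →ₗ[K i] K i, (fun t => f (c i t)) ∈ L i := by
  refine forall_congr' fun i => Submodule.span_le.trans ?_
  simp only [Set.subset_def, Set.mem_ofPred_eq, forall_exists_index, forall_eq_apply_imp_iff,
    SetLike.mem_coe]

theorem range_SRpiTranspose [∀ i, FiniteDimensional (K i) F] (L : SRLat ℓ nv K) :
    LinearMap.range (SRpiTranspose (F := F) L) = SRVL L := by
  ext c
  rw [← SetLike.mem_coe, LinearMap.coe_range, SRpiTranspose, LinearMap.coe_piMap, Set.range_piMap,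
    Set.mem_univ_pi, mem_SRVL_iff]
  refine forall_congr' fun i => ?_
  rw [← LinearMap.coe_range, SetLike.mem_coe, Fintype.range_linearCombination,
    mem_span_algebraMap_comp_iff, Submodule.span_range_coe_finBasis]

theorem stmt10_nullity_eq_dim_inter_general
    {ℓ : ℕ} {nv : Fin ℓ → ℕ}
    {F : Type} [Field F]
    {K : Fin ℓ → Type} [∀ i, Field (K i)]
    [∀ i, Algebra (K i) F] [∀ i, FiniteDimensional (K i) F]
    (C : Submodule F (SRAmb ℓ nv F))
    (L : SRLat ℓ nv K) :
    SRrk L - SRrho C L = Module.finrank F ↥(C ⊓ SRVL L) := by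
  have h := finrank_sub_finrank_map_orthogonal blockDotForm_nondegenerate blockDotForm_isRefl
    blockDotForm_nondegenerate (blockDotForm_SRpi L) (SRpiTranspose_injective L) C
  rw [← SRdual_eq_orthogonal, range_SRpiTranspose, Module.finrank_pi_fintype] at h
  simpa only [Module.finrank_fin_fun, SRrk, SRrho] using h

/-- For the sum-matroid associated to a sum-rank metric code
`C`, the nullity satisfies `η_C(L) = dim_F (C ∩ V_L)` for every
`L ∈ P(K^n)`. -/
theorem stmt10_nullity_eq_dim_inter
    {ℓ : ℕ} (hℓ : 0 < ℓ) {nv : Fin ℓ → ℕ} (hnv : ∀ i, 0 < nv i)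
    {F : Type} [Field F] [Finite F]
    {K : Fin ℓ → Type} [∀ i, Field (K i)] [∀ i, Finite (K i)]
    [∀ i, Algebra (K i) F] [∀ i, FiniteDimensional (K i) F]
    (C : Submodule F (SRAmb ℓ nv F)) (k : ℕ) (hk : Module.finrank F C = k)
    (L : SRLat ℓ nv K) :
    SRrk L - SRrho C L = Module.finrank F ↥(C ⊓ SRVL L) :=
  stmt10_nullity_eq_dim_inter_general C L
end

section
/- Let M = (K^n, ρ) be a sum-matroid with nullity function η and generalized weights d_i(M) for 1 ≤ i ≤ η(K^n). Then the generalized weights are strictly increasing: d_i(M) < d_{i+1}(M) for all 1 ≤ i < η(K^n). -/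
open Module

variable {ℓ : ℕ} {nv : Fin ℓ → ℕ} {F : Type} [Field F]
  {K : Fin ℓ → Type} [∀ i, Field (K i)] [∀ i, Algebra (K i) F]

-- lemma B
private theorem SR_lemB (ρ : SRLat ℓ nv K → ℕ) (hρ : IsSumMatroid ρ) (L : SRLat ℓ nv K)
    (h : 0 < SRrk L) :
    ∃ L' : SRLat ℓ nv K, L' ≤ L ∧ SRrk L' + 1 = SRrk L ∧ ρ L ≤ ρ L' + 1 := by
  obtain ⟨i, hi⟩ : ∃ i, 0 < finrank (K i) (L i) := by
    by_contra hc
    push_neg at hc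
    have : SRrk L = 0 := Finset.sum_eq_zero (fun j _ => by have := hc j; omega)
    omega
  -- hyperplane in component i
  have hW : L i ≠ ⊥ := by
    intro hb; rw [hb, finrank_bot] at hi; omega
  obtain ⟨x, hxW, hx⟩ := Submodule.exists_mem_ne_zero_of_ne_bot hW
  set S : Submodule (K i) (L i) := Submodule.span (K i) {(⟨x, hxW⟩ : L i)} with hS
  obtain ⟨T, hT⟩ := S.exists_isCompl
  set W' : Submodule (K i) (Fin (nv i) → K i) := T.map (L i).subtype with hW'
  have hmapS : Submodule.map (L i).subtype S = Submodule.span (K i) {x} := by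
    rw [hS, Submodule.map_span]; simp
  have hsup : W' ⊔ Submodule.span (K i) {x} = L i := by
    rw [hW', ← hmapS, ← Submodule.map_sup, sup_comm, hT.sup_eq_top,
      Submodule.map_subtype_top]
  have hfr : finrank (K i) W' + 1 = finrank (K i) (L i) := by
    have h1 : finrank (K i) S = 1 := by
      apply finrank_span_singleton; simpa using hx
    have h2 := Submodule.finrank_add_eq_of_isCompl hT
    rw [hW', Submodule.finrank_map_subtype_eq]; omega
  classical
  set L' : SRLat ℓ nv K := Function.update L i W' with hL'
  set X : SRLat ℓ nv K := Function.update (⊥ : SRLat ℓ nv K) i (Submodule.span (K i) {x}) with hX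
  have hle : L' ≤ L := by
    intro j
    rcases eq_or_ne j i with rfl | hji
    · simpa [hL'] using Submodule.map_subtype_le (L j) T
    · simp [hL', Function.update_of_ne hji]
  have key : ∀ (M : SRLat ℓ nv K), SRrk M =
      finrank (K i) (M i) + ∑ j ∈ Finset.univ.erase i, finrank (K j) (M j) :=
    fun M => (Finset.add_sum_erase _ _ (Finset.mem_univ i)).symm
  have herase : ∀ (M M' : SRLat ℓ nv K), (∀ j, j ≠ i → M j = M' j) →
      ∑ j ∈ Finset.univ.erase i, finrank (K j) (M j)
        = ∑ j ∈ Finset.univ.erase i, finrank (K j) (M' j) := by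
    intro M M' hMM'
    exact Finset.sum_congr rfl (fun j hj => by rw [hMM' j (Finset.ne_of_mem_erase hj)])
  have hrk : SRrk L' + 1 = SRrk L := by
    rw [key L, key L', herase L' L (fun j hj => by simp [hL', Function.update_of_ne hj])]
    have : L' i = W' := by simp [hL']
    rw [this]
    omega
  have hrkX : SRrk X = 1 := by
    rw [key X]
    have h0 : ∑ j ∈ Finset.univ.erase i, finrank (K j) (X j) = 0 := by
      apply Finset.sum_eq_zero
      intro j hj
      have : X j = ⊥ := by simp [hX, Function.update_of_ne (Finset.ne_of_mem_erase hj)]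
      rw [this, finrank_bot]
    have h1 : X i = Submodule.span (K i) {x} := by simp [hX]
    rw [h0, h1, finrank_span_singleton hx]
  have hsupL : L' ⊔ X = L := by
    funext j
    rcases eq_or_ne j i with rfl | hji
    · rw [Pi.sup_apply]
      simpa [hL', hX] using hsup
    · rw [Pi.sup_apply]
      simp [hL', hX, Function.update_of_ne hji]
  refine ⟨L', hle, hrk, ?_⟩
  have := hρ.2.2 L' X
  rw [hsupL] at this
  have hXle := hρ.1 X
  rw [hrkX] at hXle
  omega


-- lemma C
private theorem SR_lemC (ρ : SRLat ℓ nv K → ℕ) (hρ : IsSumMatroid ρ) :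
    ∀ n (L : SRLat ℓ nv K), SRrk L = n → ∀ j ≤ SReta ρ L, ∃ L', SReta ρ L' = j := by
  intro n
  induction n using Nat.strong_induction_on with
  | _ n ih =>
    intro L hL j hj
    rcases eq_or_lt_of_le hj with heq | hlt
    · exact ⟨L, heq.symm⟩
    · have hpos : 0 < SRrk L := by
        have h1 := hρ.1 L
        unfold SReta at hlt
        omega
      obtain ⟨L', hle, hrk, hup⟩ := SR_lemB ρ hρ L hpos
      have hmono := hρ.2.1 L' L hle
      have h1 := hρ.1 L'
      have hj' : j ≤ SReta ρ L' := by unfold SReta at *; omega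
      exact ih (SRrk L') (by omega) L' rfl j hj'

/-- The generalized weights of a sum-matroid are strictly
increasing: `d_i(M) < d_{i+1}(M)` for `1 ≤ i < η(K^n)`. -/
theorem stmt12_gw_strict_mono
    {ℓ : ℕ} (hℓ : 0 < ℓ) {nv : Fin ℓ → ℕ} (hnv : ∀ i, 0 < nv i)
    {F : Type} [Field F] [Finite F]
    {K : Fin ℓ → Type} [∀ i, Field (K i)] [∀ i, Finite (K i)]
    [∀ i, Algebra (K i) F] [∀ i, FiniteDimensional (K i) F]
    (ρ : SRLat ℓ nv K → ℕ) (hρ : IsSumMatroid ρ)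
    (i : ℕ) (hi1 : 1 ≤ i) (hi2 : i < SReta ρ (⊤ : SRLat ℓ nv K)) :
    SRgw ρ i < SRgw ρ (i + 1) := by
  have hne : {w | ∃ L : SRLat ℓ nv K, SReta ρ L = i + 1 ∧ SRrk L = w}.Nonempty := by
    obtain ⟨L, hL⟩ := SR_lemC ρ hρ (SRrk (⊤ : SRLat ℓ nv K)) ⊤ rfl (i + 1) hi2
    exact ⟨SRrk L, L, hL, rfl⟩
  have hmem := Nat.sInf_mem hne
  obtain ⟨L, hηL, hrkL⟩ := hmem
  have hR1 := hρ.1 L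
  have hpos : 0 < SRrk L := by unfold SReta at hηL; omega
  obtain ⟨L', hle, hrk', hup⟩ := SR_lemB ρ hρ L hpos
  have hmono := hρ.2.1 L' L hle
  have h1 := hρ.1 L'
  have hcases : SReta ρ L' = i ∨ SReta ρ L' = i + 1 := by
    unfold SReta at *; omega
  rcases hcases with hc | hc
  · have hle1 : SRgw ρ i ≤ SRrk L' := Nat.sInf_le ⟨L', hc, rfl⟩
    have h2 : SRrk L = SRgw ρ (i + 1) := hrkL
    omega
  · exfalso
    have h3 : sInf {w | ∃ L : SRLat ℓ nv K, SReta ρ L = i + 1 ∧ SRrk L = w} ≤ SRrk L' :=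
      Nat.sInf_le ⟨L', hc, rfl⟩
    rw [← hrkL] at h3
    omega
end

section
/- Let M = (K^n, ρ) be a sum-matroid of rank k on P(K^n) with n = n_1+⋯+n_ℓ, with dual M*, generalized weights d_r = d_r(M) for 1 ≤ r ≤ n−k and d_j^⊥ = d_j(M*) for 1 ≤ j ≤ k. Fix r with 1 ≤ r ≤ n−k and set t = k + r − d_r. Then for every integer s > 0 with 1 ≤ t + s ≤ k, one has d_{t+s}^⊥ ≠ n − d_r + 1. -/
open Module

variable {ℓ : ℕ} {nv : Fin ℓ → ℕ} {F : Type} [Field F]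
  {K : Fin ℓ → Type} [∀ i, Field (K i)] [∀ i, Algebra (K i) F]

/-! If `L` attained `d_{t+s}(M*) = n - d_r + 1`, then `η*(L) = k - ρ(L^⊥)` together with
`Rk(L^⊥) = n - Rk L = d_r - 1` gives `η(L^⊥) ≥ r + s - 1 ≥ r`.  Nullity is monotone and grows by at
most one when `Rk` does, so it takes every value in `[0, η(L^⊥)]` below `L^⊥`: some `L' ≤ L^⊥` has
`η(L') = r` and `Rk L' < d_r`, contradicting the minimality of `d_r`. -/

section Orthogonal

variable {k : Type} [Field k] {m : ℕ}

lemma SRorth_eq_comap_dualAnnihilator (W : Submodule k (Fin m → k)) :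
    SRorth W = W.dualAnnihilator.comap (dotProductEquiv k (Fin m)).toLinearMap := by
  ext v
  simp [SRorth, Submodule.mem_dualAnnihilator, dotProduct]

lemma finrank_add_finrank_SRorth (W : Submodule k (Fin m → k)) :
    finrank k W + finrank k (SRorth W) = m := by
  rw [SRorth_eq_comap_dualAnnihilator, Submodule.comap_equiv_eq_map_symm,
    LinearEquiv.finrank_map_eq, Subspace.finrank_add_finrank_dualAnnihilator_eq,
    finrank_fin_fun]

end Orthogonal

section Rk

lemma SRrk_mono {L L' : SRLat ℓ nv K} (h : L ≤ L') : SRrk L ≤ SRrk L' :=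
  Finset.sum_le_sum fun i _ => Submodule.finrank_mono (h i)

lemma SRrk_top : SRrk (⊤ : SRLat ℓ nv K) = ∑ i, nv i :=
  Finset.sum_congr rfl fun i _ => by
    rw [Pi.top_apply, finrank_top, finrank_fin_fun]

lemma SRrk_add_SRrk_SRlatPerp (L : SRLat ℓ nv K) :
    SRrk L + SRrk (SRlatPerp L) = ∑ i, nv i := by
  rw [SRrk, SRrk, ← Finset.sum_add_distrib]
  exact Finset.sum_congr rfl fun i _ => finrank_add_finrank_SRorth (L i)

lemma exists_sup_eq_and_SRrk_add_eq_of_le {L L' : SRLat ℓ nv K} (h : L ≤ L') :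
    ∃ X, L ⊔ X = L' ∧ SRrk L + SRrk X = SRrk L' := by
  choose C hC using fun i => Submodule.exists_isCompl (L i)
  have hsup : L ⊔ (fun i => C i ⊓ L' i) = L' := by
    funext i
    rw [Pi.sup_apply, ← sup_inf_assoc_of_le _ (h i), (hC i).sup_eq_top, top_inf_eq]
  have hinf : L ⊓ (fun i => C i ⊓ L' i) = ⊥ := by
    funext i
    exact disjoint_iff.mp ((hC i).disjoint.mono_right inf_le_left)
  refine ⟨_, hsup, ?_⟩
  have := SRrk_sup_add_SRrk_inf L fun i => C i ⊓ L' i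
  rwa [hsup, hinf, SRrk_bot, add_zero, eq_comm] at this

lemma exists_le_SRrk_add_one_eq {L : SRLat ℓ nv K} (h : 0 < SRrk L) :
    ∃ L' ≤ L, SRrk L' + 1 = SRrk L := by
  obtain ⟨i, -, hi⟩ := Finset.exists_ne_zero_of_sum_ne_zero h.ne'
  have hbot : L i ≠ ⊥ := fun hbot => hi (by rw [hbot, finrank_bot])
  obtain ⟨v, hvL, hv0⟩ := Submodule.exists_mem_ne_zero_of_ne_bot hbot
  set Y : SRLat ℓ nv K := Function.update ⊥ i (K i ∙ v)
  have hYL : Y ≤ L := by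
    intro j
    rcases eq_or_ne j i with rfl | hj
    · simpa [Y] using hvL
    · simp [Y, hj]
  have hY : SRrk Y = 1 := by
    rw [SRrk, Finset.sum_eq_single i (fun j _ hj => by simp [Y, hj]) (by simp)]
    rw [show Y i = K i ∙ v from Function.update_self .., finrank_span_singleton hv0]
  obtain ⟨X, hX, hrk⟩ := exists_sup_eq_and_SRrk_add_eq_of_le hYL
  exact ⟨X, hX ▸ le_sup_right, by omega⟩

end Rk

section SumMatroid

variable {ρ : SRLat ℓ nv K → ℕ}

lemma exists_SReta_eq_and_SRrk_eq_SRgw {i : ℕ} (h : SRgw ρ i ≠ 0) :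
    ∃ L, SReta ρ L = i ∧ SRrk L = SRgw ρ i := by
  have hne : {w | ∃ L : SRLat ℓ nv K, SReta ρ L = i ∧ SRrk L = w}.Nonempty :=
    Set.nonempty_iff_ne_empty.mpr fun he => h (by rw [SRgw, he, Nat.sInf_empty])
  exact Nat.sInf_mem hne

namespace IsSumMatroid

variable (hρ : IsSumMatroid ρ)
include hρ

lemma le_add_SRrk (L X : SRLat ℓ nv K) : ρ (L ⊔ X) ≤ ρ L + SRrk X := by
  have := hρ.2.2 L X
  have := hρ.1 X
  omega

lemma add_SRrk_le_of_le {L L' : SRLat ℓ nv K} (h : L ≤ L') :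
    ρ L' + SRrk L ≤ ρ L + SRrk L' := by
  obtain ⟨X, rfl, hrk⟩ := exists_sup_eq_and_SRrk_add_eq_of_le h
  have := hρ.le_add_SRrk L X
  omega

lemma exists_le_SReta_eq {L : SRLat ℓ nv K} {r : ℕ} (h : r ≤ SReta ρ L) :
    ∃ L' ≤ L, SReta ρ L' = r := by
  induction hN : SRrk L generalizing L with
  | zero => exact ⟨L, le_rfl, by have := hρ.1 L; unfold SReta at h ⊢; omega⟩
  | succ N ih =>
    rcases h.eq_or_lt with h | h
    · exact ⟨L, le_rfl, h.symm⟩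
    obtain ⟨L', hL'L, hrk⟩ := exists_le_SRrk_add_one_eq (by omega : 0 < SRrk L)
    have := hρ.2.1 L' L hL'L
    obtain ⟨L'', hL'', hη⟩ := ih (L := L') (by unfold SReta at h ⊢; omega) (by omega)
    exact ⟨L'', hL''.trans hL'L, hη⟩

lemma SRgw_le {L : SRLat ℓ nv K} {r : ℕ} (h : r ≤ SReta ρ L) : SRgw ρ r ≤ SRrk L := by
  obtain ⟨L', hL'L, hη⟩ := hρ.exists_le_SReta_eq h
  have hmem : SRrk L' ∈ {w | ∃ L, SReta ρ L = r ∧ SRrk L = w} := ⟨L', hη, rfl⟩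
  exact (Nat.sInf_le hmem).trans (SRrk_mono hL'L)

/-- The truncated subtractions in `SRdualRk` and `SReta` are exact, since
`ρ ⊤ ≤ ρ L^⊥ + Rk L`. -/
lemma SReta_SRdualRk (L : SRLat ℓ nv K) :
    SReta (SRdualRk ρ) L = ρ ⊤ - ρ (SRlatPerp L) := by
  have := hρ.add_SRrk_le_of_le (le_top : SRlatPerp L ≤ ⊤)
  have := hρ.2.1 _ _ (le_top : SRlatPerp L ≤ ⊤)
  have := SRrk_add_SRrk_SRlatPerp L
  rw [SRrk_top] at *
  unfold SReta SRdualRk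
  omega

end IsSumMatroid

end SumMatroid

theorem stmt15_dual_gw_ne_general
    {ℓ : ℕ} {nv : Fin ℓ → ℕ}
    {K : Fin ℓ → Type} [∀ i, Field (K i)]
    (ρ : SRLat ℓ nv K → ℕ) (hρ : IsSumMatroid ρ)
    (k : ℕ) (hk : ρ (⊤ : SRLat ℓ nv K) = k)
    (r : ℕ) (hr2 : r ≤ (∑ i, nv i) - k)
    (s : ℕ) (hs : 0 < s) :
    SRgw (SRdualRk ρ) (k + r - SRgw ρ r + s) ≠ (∑ i, nv i) - SRgw ρ r + 1 := by
  intro hcon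
  have hDn : SRgw ρ r ≤ ∑ i, nv i :=
    SRrk_top (K := K) ▸ hρ.SRgw_le (by rwa [SReta, hk, SRrk_top])
  obtain ⟨L, hLeta, hLrk⟩ := exists_SReta_eq_and_SRrk_eq_SRgw (i := k + r - SRgw ρ r + s)
    (by rw [hcon]; exact Nat.succ_ne_zero _)
  rw [hρ.SReta_SRdualRk, hk] at hLeta
  have hperp := SRrk_add_SRrk_SRlatPerp L
  have hgw_perp := hρ.SRgw_le (L := SRlatPerp L) (r := r) (by unfold SReta; omega)
  omega

/-- For a sum-matroid `M` of rank `k`, fix `1 ≤ r ≤ n − k` and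
set `t = k + r − d_r`.  For every `s > 0` with `1 ≤ t + s ≤ k`,
`d_{t+s}^⊥ ≠ n − d_r + 1`. -/
theorem stmt15_dual_gw_ne
    {ℓ : ℕ} (hℓ : 0 < ℓ) {nv : Fin ℓ → ℕ} (hnv : ∀ i, 0 < nv i)
    {F : Type} [Field F] [Finite F]
    {K : Fin ℓ → Type} [∀ i, Field (K i)] [∀ i, Finite (K i)]
    [∀ i, Algebra (K i) F] [∀ i, FiniteDimensional (K i) F]
    (ρ : SRLat ℓ nv K → ℕ) (hρ : IsSumMatroid ρ)
    (k : ℕ) (hk : ρ (⊤ : SRLat ℓ nv K) = k)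
    (r : ℕ) (hr1 : 1 ≤ r) (hr2 : r ≤ (∑ i, nv i) - k)
    (s : ℕ) (hs : 0 < s)
    (hts1 : 1 ≤ k + r - SRgw ρ r + s) (hts2 : k + r - SRgw ρ r + s ≤ k) :
    SRgw (SRdualRk ρ) (k + r - SRgw ρ r + s) ≠ (∑ i, nv i) - SRgw ρ r + 1 :=
  stmt15_dual_gw_ne_general ρ hρ k hk r hr2 s hs
end
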